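/- arXiv:1712.03456 — 3 statements merged into one kernel-verified Lean document; each statement's English description precedes it below -/
import Mathlib

section
/- Let r_1, r_2 ≥ 2 and b_1, b_2 ≥ 1 be integers. Suppose that for all k_1 ≥ 1, n_1 ≥ r_1 k_1 and every partition P of [n_1] into parts of size at most b_1, one has χ(KG^{r_1}(n_1,k_1;P)) ≥ ⌈(n_1 - r_1(k_1-1))/(r_1-1)⌉, and similarly for all k_2 ≥ 1, n_2 ≥ r_2 k_2 and partitions Q of [n_2] with parts of size at most b_2, χ(KG^{r_2}(n_2,k_2;Q)) ≥ ⌈(n_2 - r_2(k_2-1))/(r_2-1)⌉. Then for all k ≥ 1, n ≥ r_1 r_2 k, and every partition R of [n] into parts of size at most b_1 b_2, one has χ(KG^{r_1 r_2}(n,k;R)) ≥ ⌈(n - r_1 r_2(k-1))/(r_1 r_2 - 1)⌉. -/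
open Finset

/-- Ceiling division on naturals: `⌈a / b⌉`. -/
def cld (a b : ℕ) : ℕ := (a + b - 1) / b

/-- `P` is a partition of `Fin N` indexed by `Fin n`. -/
def IsPartition {N n : ℕ} (P : Fin n → Finset (Fin N)) : Prop :=
  (∀ i j, i ≠ j → Disjoint (P i) (P j)) ∧ ∀ x, ∃ i, x ∈ P i

/-- `σ` is transversal to the partition `P`: it meets each part in at most one element. -/
def Transversal {N n : ℕ} (P : Fin n → Finset (Fin N)) (σ : Finset (Fin N)) : Prop :=
  ∀ i, (σ ∩ P i).card ≤ 1

/-- A set `σ ⊆ [n]` is `t`-wide: it is not contained in any interval of length `t`. -/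
def Wide (n t : ℕ) (σ : Finset (Fin n)) : Prop :=
  ∀ a : ℕ, ¬ ∀ x ∈ σ, a ≤ x.val ∧ x.val < a + t

/-- Cyclic distance between two elements of `[n]`. -/
def cycDist (n : ℕ) (x y : Fin n) : ℕ :=
  min (max x.val y.val - min x.val y.val) (n - (max x.val y.val - min x.val y.val))

/-- `σ` is `s`-stable: any two of its elements are at cyclic distance at least `s`. -/
def Stable (n s : ℕ) (σ : Finset (Fin n)) : Prop :=
  ∀ x ∈ σ, ∀ y ∈ σ, x ≠ y → s ≤ cycDist n x y

/-- `b(r) = 2^{α₀}(p₁-1)^{α₁}⋯(p_t-1)^{α_t}` for `r = 2^{α₀}p₁^{α₁}⋯p_t^{α_t}`. -/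
def bfun (r : ℕ) : ℕ := r.factorization.prod fun p a => (if p = 2 then 2 else p - 1) ^ a

/-- Proper coloring of `KG^r(n,k)`: no `r` pairwise disjoint `k`-subsets monochromatic. -/
def ProperKG (r n k : ℕ) {m : ℕ} (c : Finset (Fin n) → Fin m) : Prop :=
  ∀ A : Fin r → Finset (Fin n), (∀ j, (A j).card = k) →
    (∀ j j', j ≠ j' → Disjoint (A j) (A j')) →
    ¬ ∀ j j', c (A j) = c (A j')

noncomputable def chiKG (r n k : ℕ) : ℕ :=
  sInf {m | ∃ c : Finset (Fin n) → Fin m, ProperKG r n k c}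

/-- Proper coloring of `KG^r(N,k;P)` (vertices: transversal `k`-subsets). -/
def ProperP (r N k : ℕ) {ℓ : ℕ} (P : Fin ℓ → Finset (Fin N)) {m : ℕ}
    (c : Finset (Fin N) → Fin m) : Prop :=
  ∀ A : Fin r → Finset (Fin N), (∀ j, (A j).card = k) →
    (∀ j, Transversal P (A j)) →
    (∀ j j', j ≠ j' → Disjoint (A j) (A j')) →
    ¬ ∀ j j', c (A j) = c (A j')

noncomputable def chiP (r N k : ℕ) {ℓ : ℕ} (P : Fin ℓ → Finset (Fin N)) : ℕ :=
  sInf {m | ∃ c : Finset (Fin N) → Fin m, ProperP r N k P c}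

/-- Proper coloring of `KG^r_s(n,k)`: a hyperedge is an `r`-tuple of `k`-subsets such that
each `i ∈ [n]` lies in at most `s i` of them. -/
def ProperS (r n k : ℕ) (s : Fin n → ℕ) {m : ℕ} (c : Finset (Fin n) → Fin m) : Prop :=
  ∀ A : Fin r → Finset (Fin n), (∀ j, (A j).card = k) →
    (∀ i : Fin n, ((univ : Finset (Fin r)).filter fun j => i ∈ A j).card ≤ s i) →
    ¬ ∀ j j', c (A j) = c (A j')

noncomputable def chiS (r n k : ℕ) (s : Fin n → ℕ) : ℕ :=
  sInf {m | ∃ c : Finset (Fin n) → Fin m, ProperS r n k s c}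

/-- Proper coloring of `KG^r_A(n,k)` (vertices: `k`-subsets not contained in `A`). -/
def ProperA (r n k : ℕ) (A : Finset (Fin n)) {m : ℕ} (c : Finset (Fin n) → Fin m) : Prop :=
  ∀ B : Fin r → Finset (Fin n), (∀ j, (B j).card = k) → (∀ j, ¬ B j ⊆ A) →
    (∀ j j', j ≠ j' → Disjoint (B j) (B j')) →
    ¬ ∀ j j', c (B j) = c (B j')

noncomputable def chiA (r n k : ℕ) (A : Finset (Fin n)) : ℕ :=
  sInf {m | ∃ c : Finset (Fin n) → Fin m, ProperA r n k A c}

/-- Proper coloring of the `r`-stable subhypergraph `KG^r(n,k)_{r-stab}`. -/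
def ProperStab (r n k : ℕ) {m : ℕ} (c : Finset (Fin n) → Fin m) : Prop :=
  ∀ A : Fin r → Finset (Fin n), (∀ j, (A j).card = k) → (∀ j, Stable n r (A j)) →
    (∀ j j', j ≠ j' → Disjoint (A j) (A j')) →
    ¬ ∀ j j', c (A j) = c (A j')

noncomputable def chiStab (r n k : ℕ) : ℕ :=
  sInf {m | ∃ c : Finset (Fin n) → Fin m, ProperStab r n k c}

/-- Proper coloring of `KG^r(N,k;P)_{t-wide}` (vertices: `t`-wide transversal `k`-subsets). -/
def ProperPW (r N k t : ℕ) {ℓ : ℕ} (P : Fin ℓ → Finset (Fin N)) {m : ℕ}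
    (c : Finset (Fin N) → Fin m) : Prop :=
  ∀ A : Fin r → Finset (Fin N), (∀ j, (A j).card = k) →
    (∀ j, Transversal P (A j)) → (∀ j, Wide N t (A j)) →
    (∀ j j', j ≠ j' → Disjoint (A j) (A j')) →
    ¬ ∀ j j', c (A j) = c (A j')

noncomputable def chiPW (r N k t : ℕ) {ℓ : ℕ} (P : Fin ℓ → Finset (Fin N)) : ℕ :=
  sInf {m | ∃ c : Finset (Fin N) → Fin m, ProperPW r N k t P c}

/-- Proper coloring of `KG^r_s(n,k)_{t-wide}` (vertices: `t`-wide `k`-subsets). -/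
def ProperSW (r n k t : ℕ) (s : Fin n → ℕ) {m : ℕ} (c : Finset (Fin n) → Fin m) : Prop :=
  ∀ A : Fin r → Finset (Fin n), (∀ j, (A j).card = k) → (∀ j, Wide n t (A j)) →
    (∀ i : Fin n, ((univ : Finset (Fin r)).filter fun j => i ∈ A j).card ≤ s i) →
    ¬ ∀ j j', c (A j) = c (A j')

noncomputable def chiSW (r n k t : ℕ) (s : Fin n → ℕ) : ℕ :=
  sInf {m | ∃ c : Finset (Fin n) → Fin m, ProperSW r n k t s c}

/-- Extension of `s : Fin n → ℕ` to `ℕ` by zero. -/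
def sE {n : ℕ} (s : Fin n → ℕ) (i : ℕ) : ℕ := if h : i < n then s ⟨i, h⟩ else 0

/-- `blockSum s j t = s_j + s_{j+1} + ⋯ + s_{j+t-1}`. -/
def blockSum {n : ℕ} (s : Fin n → ℕ) (j t : ℕ) : ℕ := ∑ i ∈ Finset.Ico j (j + t), sE s i

/-- The partition of `[N]` into consecutive blocks of sizes `s_1, …, s_n`. -/
def blocks {n : ℕ} (s : Fin n → ℕ) (N : ℕ) (j : Fin n) : Finset (Fin N) :=
  univ.filter fun x => blockSum s 0 j.val ≤ x.val ∧ x.val < blockSum s 0 (j.val + 1)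

/-!
Let `c` be a proper `m`-colouring of `KG^{r₁r₂}(n,k;R)` and suppose `n - r₁r₂(k-1) > m(r₁r₂-1)`.
Cutting every part of `R` into at most `b₂` pieces of size at most `b₁` gives a partition `P`
with parts of size at most `b₁` such that every `P`-transversal set meets each part of `R` at most
`b₂` times. Put `k' = r₂(k-1) + m(r₂-1) + 1`. On a `P`-transversal `k'`-set `S` the partition
induced by `R` has parts of size at most `b₂`, so by the hypothesis for `r₂` there are `r₂`
disjoint `R`-transversal `k`-subsets of `S` of one colour; give `S` that colour. This is a proper
`m`-colouring of `KG^{r₁}(n,k';P)`, because `r₁` disjoint such sets `S` would yield `r₁r₂`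
disjoint `k`-sets of one colour. The hypothesis for `r₁` now gives `n - r₁(k'-1) ≤ m(r₁-1)`,
which contradicts the assumption on `m`.
-/

section Rank

variable {α : Type*} [LinearOrder α] {s : Finset α}

lemma card_filter_lt_lt_card {x : α} (hx : x ∈ s) : #{y ∈ s | y < x} < #s :=
  card_lt_card (filter_ssubset.2 ⟨x, hx, lt_irrefl x⟩)

lemma strictMonoOn_card_filter_lt (s : Finset α) : StrictMonoOn (fun x => #{y ∈ s | y < x}) s := by
  intro x hx y _ hxy
  refine card_lt_card ((ssubset_iff_of_subset ?_).2 ⟨x, ?_, ?_⟩)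
  · exact monotone_filter_right _ fun _ _ h => h.trans hxy
  · simpa [hxy] using hx
  · simp

lemma exists_fiber_card_le (s : Finset α) {a b : ℕ} (ha : 0 < a) (hs : #s ≤ a * b) :
    ∃ g : α → ℕ, (∀ x ∈ s, g x < b) ∧ ∀ j, #{x ∈ s | g x = j} ≤ a := by
  refine ⟨fun x => #{y ∈ s | y < x} / a, fun x hx => ?_, fun j => ?_⟩
  · exact Nat.div_lt_of_lt_mul ((card_filter_lt_lt_card hx).trans_le hs)
  · calc #{x ∈ s | #{y ∈ s | y < x} / a = j} ≤ #(Ico (j * a) (j * a + a)) := by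
          refine card_le_card_of_injOn (fun x => #{y ∈ s | y < x}) (fun x hx => ?_)
            ((strictMonoOn_card_filter_lt s).injOn.mono (filter_subset _ _))
          simp only [coe_filter, Set.mem_ofPred_eq] at hx
          have := Nat.lt_mul_div_succ #{y ∈ s | y < x} ha
          rw [coe_Ico, Set.mem_Ico, ← hx.2]
          exact ⟨Nat.div_mul_le_self _ _, by linarith⟩
      _ = a := by simp

end Rank

lemma cld_le_iff {a b m : ℕ} (hb : 0 < b) : cld a b ≤ m ↔ a ≤ b * m :=
  ceilDiv_le_iff_le_mul hb

section Hypergraph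

variable {N l r k m : ℕ}

structure IsMonoEdge (P : Fin l → Finset (Fin N)) (k : ℕ) (c : Finset (Fin N) → Fin m)
    (A : Fin r → Finset (Fin N)) : Prop where
  card_eq : ∀ j, #(A j) = k
  transversal : ∀ j, Transversal P (A j)
  disjoint : ∀ j j', j ≠ j' → Disjoint (A j) (A j')
  color_eq : ∀ j j', c (A j) = c (A j')

lemma properP_iff {P : Fin l → Finset (Fin N)} {c : Finset (Fin N) → Fin m} :
    ProperP r N k P c ↔ ∀ A : Fin r → Finset (Fin N), ¬ IsMonoEdge P k c A :=
  ⟨fun hc A hA => hc A hA.1 hA.2 hA.3 hA.4, fun hc A h1 h2 h3 h4 => hc A ⟨h1, h2, h3, h4⟩⟩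

lemma chiP_le {P : Fin l → Finset (Fin N)} {c : Finset (Fin N) → Fin m}
    (hc : ProperP r N k P c) : chiP r N k P ≤ m :=
  Nat.sInf_le ⟨c, hc⟩

lemma exists_isMonoEdge_of_lt_chiP {P : Fin l → Finset (Fin N)} (h : m < chiP r N k P)
    (c : Finset (Fin N) → Fin m) : ∃ A : Fin r → Finset (Fin N), IsMonoEdge P k c A := by
  by_contra! hA
  exact (chiP_le (properP_iff.2 hA)).not_gt h

lemma exists_properP (hr : 2 ≤ r) (hk : 1 ≤ k) (P : Fin l → Finset (Fin N)) :
    ∃ m, ∃ c : Finset (Fin N) → Fin m, ProperP r N k P c := by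
  refine ⟨_, Fintype.equivFin _, fun A hA _ hdisj hmono => ?_⟩
  have hdisj01 := hdisj ⟨0, by omega⟩ ⟨1, by omega⟩ (by simp)
  rw [(Fintype.equivFin _).injective (hmono _ _), disjoint_self, bot_eq_empty, ← card_eq_zero,
    hA] at hdisj01
  omega

lemma le_chiP_of_forall_properP {a : ℕ} (hr : 2 ≤ r) (hk : 1 ≤ k) (P : Fin l → Finset (Fin N))
    (h : ∀ m (c : Finset (Fin N) → Fin m), ProperP r N k P c → a ≤ m) : a ≤ chiP r N k P :=
  le_csInf (exists_properP hr hk P) fun _ ⟨c, hc⟩ => h _ c hc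

end Hypergraph

section Partition

variable {n t : ℕ} {R : Fin t → Finset (Fin n)}

theorem IsPartition.exists_refinement (hR : IsPartition R) {a b : ℕ} (ha : 0 < a)
    (hRc : ∀ i, #(R i) ≤ a * b) :
    ∃ (l : ℕ) (P : Fin l → Finset (Fin n)), IsPartition P ∧ (∀ p, #(P p) ≤ a) ∧
      ∀ S, Transversal P S → ∀ i, #(S ∩ R i) ≤ b := by
  choose g hg_lt hg_card using fun i => exists_fiber_card_le (R i) ha (hRc i)
  let e : Fin t × Fin b ≃ Fin (t * b) := finProdFinEquiv
  let P : Fin (t * b) → Finset (Fin n) := fun p =>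
    {x ∈ R (e.symm p).1 | g (e.symm p).1 x = (e.symm p).2}
  have mem_P {x i} (hx : x ∈ R i) : x ∈ P (e (i, ⟨g i x, hg_lt i x hx⟩)) := by
    simp [P, hx]
  refine ⟨t * b, P, ⟨fun p q hpq => disjoint_left.2 fun x hxp hxq => hpq ?_, fun x => ?_⟩,
    fun p => hg_card _ _, fun S hS i => ?_⟩
  · simp only [P, mem_filter] at hxp hxq
    have hi : (e.symm p).1 = (e.symm q).1 := by
      by_contra hne
      exact disjoint_left.1 (hR.1 _ _ hne) hxp.1 hxq.1
    refine e.symm.injective (Prod.ext hi (Fin.ext ?_))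
    rw [← hxp.2, ← hxq.2, hi]
  · obtain ⟨i, hi⟩ := hR.2 x
    exact ⟨_, mem_P hi⟩
  · calc #(S ∩ R i) ≤ #(range b) := by
          refine card_le_card_of_injOn (g i) (fun x hx => ?_) fun x hx y hy hxy => ?_
          · exact mem_range.2 (hg_lt i x (mem_inter.1 hx).2)
          · simp only [coe_inter, Set.mem_inter_iff, mem_coe] at hx hy
            have hy' : y ∈ P (e (i, ⟨g i x, hg_lt i x hx.2⟩)) := by simp [P, hy.2, hxy]
            exact card_le_one.1 (hS _) x (mem_inter.2 ⟨hx.1, mem_P hx.2⟩) y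
              (mem_inter.2 ⟨hy.1, hy'⟩)
      _ = b := card_range b

def comapPartition {d : ℕ} (ι : Fin d → Fin n) (R : Fin t → Finset (Fin n)) (i : Fin t) :
    Finset (Fin d) :=
  {x | ι x ∈ R i}

variable {d : ℕ} {ι : Fin d → Fin n}

theorem IsPartition.comap (hR : IsPartition R) (ι : Fin d → Fin n) :
    IsPartition (comapPartition ι R) := by
  refine ⟨fun i j hij => disjoint_left.2 fun x hxi hxj => ?_, fun x => ?_⟩
  · simp only [comapPartition, mem_filter, mem_univ, true_and] at hxi hxj
    exact disjoint_left.1 (hR.1 i j hij) hxi hxj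
  · obtain ⟨i, hi⟩ := hR.2 (ι x)
    exact ⟨i, by simpa [comapPartition] using hi⟩

lemma card_comapPartition_le (hι : Function.Injective ι) {S : Finset (Fin n)} (hS : ∀ x, ι x ∈ S)
    (i : Fin t) : #(comapPartition ι R i) ≤ #(S ∩ R i) :=
  card_le_card_of_injOn ι (fun x hx => by simp_all [comapPartition]) hι.injOn

lemma image_inter_eq_image_inter_comapPartition (A : Finset (Fin d)) (i : Fin t) :
    A.image ι ∩ R i = (A ∩ comapPartition ι R i).image ι := by
  ext y
  simp only [mem_inter, mem_image, comapPartition, mem_filter, mem_univ, true_and]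
  grind

lemma IsMonoEdge.image {k m r : ℕ} {c : Finset (Fin n) → Fin m} {A : Fin r → Finset (Fin d)}
    (hι : Function.Injective ι)
    (hA : IsMonoEdge (comapPartition ι R) k (fun σ => c (σ.image ι)) A) :
    IsMonoEdge R k c fun j => (A j).image ι where
  card_eq j := by rw [card_image_of_injective _ hι, hA.card_eq]
  transversal j i := by
    rw [image_inter_eq_image_inter_comapPartition, card_image_of_injective _ hι]
    exact hA.transversal j i
  disjoint j j' h := (disjoint_image hι).2 (hA.disjoint j j' h)
  color_eq := hA.color_eq

theorem exists_isMonoEdge_subset (hR : IsPartition R) {b k m r : ℕ} (c : Finset (Fin n) → Fin m)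
    {S : Finset (Fin n)} (hS : ∀ i, #(S ∩ R i) ≤ b)
    (hχ : ∀ Q : Fin t → Finset (Fin #S), IsPartition Q → (∀ i, #(Q i) ≤ b) → m < chiP r #S k Q) :
    ∃ B : Fin r → Finset (Fin n), IsMonoEdge R k c B ∧ ∀ j, B j ⊆ S := by
  let ι : Fin #S → Fin n := fun x => S.equivFin.symm x
  have hι : Function.Injective ι := Subtype.val_injective.comp S.equivFin.symm.injective
  have hιS : ∀ x, ι x ∈ S := fun x => (S.equivFin.symm x).2
  obtain ⟨A, hA⟩ := exists_isMonoEdge_of_lt_chiP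
    (hχ _ (hR.comap ι) fun i => (card_comapPartition_le hι hιS i).trans (hS i))
    fun σ => c (σ.image ι)
  exact ⟨_, hA.image hι, fun j => image_subset_iff.2 fun x _ => hιS x⟩

end Partition

theorem chiP_le_of_forall_exists_isMonoEdge {n k k' l m r1 r2 t : ℕ} (hr2 : 0 < r2)
    {R : Fin t → Finset (Fin n)} {c : Finset (Fin n) → Fin m} (hc : ProperP (r1 * r2) n k R c)
    {P : Fin l → Finset (Fin n)}
    (hB : ∀ S, #S = k' → Transversal P S →
      ∃ B : Fin r2 → Finset (Fin n), IsMonoEdge R k c B ∧ ∀ j, B j ⊆ S) :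
    chiP r1 n k' P ≤ m := by
  choose! B hB hBS using hB
  refine chiP_le (c := fun S => c (B S ⟨0, hr2⟩)) fun A hA hAP hAdisj hAc => ?_
  let e : Fin r1 × Fin r2 ≃ Fin (r1 * r2) := finProdFinEquiv
  let D : Fin (r1 * r2) → Finset (Fin n) := fun p => B (A (e.symm p).1) (e.symm p).2
  refine properP_iff.1 hc D ⟨fun p => (hB _ (hA _) (hAP _)).card_eq _,
    fun p => (hB _ (hA _) (hAP _)).transversal _, fun p q hpq => ?_, fun p q => ?_⟩
  · by_cases hi : (e.symm p).1 = (e.symm q).1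
    · have hj : (e.symm p).2 ≠ (e.symm q).2 := fun hj => hpq (e.symm.injective (Prod.ext hi hj))
      simp only [D, hi] at hj ⊢
      exact (hB _ (hA _) (hAP _)).disjoint _ _ hj
    · exact (hAdisj _ _ hi).mono (hBS _ (hA _) (hAP _) _) (hBS _ (hA _) (hAP _) _)
  · exact ((hB _ (hA _) (hAP _)).color_eq _ _).trans
      ((hAc _ _).trans ((hB _ (hA _) (hAP _)).color_eq _ _))

theorem stmt1_general (r1 r2 b1 b2 : ℕ) (hr1 : 2 ≤ r1) (hr2 : 2 ≤ r2) (hb1 : 1 ≤ b1)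
    (H1 : ∀ (k1 n1 l : ℕ) (P : Fin l → Finset (Fin n1)), 1 ≤ k1 → r1 * k1 ≤ n1 →
      IsPartition P → (∀ i, (P i).card ≤ b1) →
      cld (n1 - r1 * (k1 - 1)) (r1 - 1) ≤ chiP r1 n1 k1 P)
    (H2 : ∀ (k2 n2 l : ℕ) (Q : Fin l → Finset (Fin n2)), 1 ≤ k2 → r2 * k2 ≤ n2 →
      IsPartition Q → (∀ i, (Q i).card ≤ b2) →
      cld (n2 - r2 * (k2 - 1)) (r2 - 1) ≤ chiP r2 n2 k2 Q)
    (k n t : ℕ) (R : Fin t → Finset (Fin n)) (hk : 1 ≤ k)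
    (hR : IsPartition R) (hRc : ∀ i, (R i).card ≤ b1 * b2) :
    cld (n - r1 * r2 * (k - 1)) (r1 * r2 - 1) ≤ chiP (r1 * r2) n k R := by
  have hr : 4 ≤ r1 * r2 := Nat.mul_le_mul hr1 hr2
  refine le_chiP_of_forall_properP (by omega) hk R fun m c hc => ?_
  rw [cld_le_iff (by omega)]
  by_contra! hcon
  have hm : 0 < m := Fin.pos (c ∅)
  have hr1m := Nat.le_mul_of_pos_right (r1 - 1) hm
  have hr2m := Nat.le_mul_of_pos_right (r2 - 1) hm
  have hr2k : r2 * k = r2 * (k - 1) + r2 := by rw [← mul_add_one, Nat.sub_add_cancel hk]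
  have hsplit : r1 * (r2 * (k - 1) + (r2 - 1) * m) + (r1 - 1) * m
      = r1 * r2 * (k - 1) + (r1 * r2 - 1) * m := by
    zify [show 1 ≤ r1 by omega, show 1 ≤ r2 by omega, show 1 ≤ r1 * r2 by omega]
    ring
  -- `k'` is the least size for which the bound of `H2` exceeds `m`
  set k' := r2 * (k - 1) + (r2 - 1) * m + 1 with hk'
  obtain ⟨l, P, hP, hPc, hPR⟩ := hR.exists_refinement hb1 hRc
  have hB : ∀ S, #S = k' → Transversal P S →
      ∃ B : Fin r2 → Finset (Fin n), IsMonoEdge R k c B ∧ ∀ j, B j ⊆ S := by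
    rintro S hS hSP
    refine exists_isMonoEdge_subset hR c (hPR S hSP) fun Q hQ hQc => lt_of_not_ge fun hle => ?_
    have hQχ := (H2 k #S t Q hk (by omega) hQ hQc).trans hle
    rw [cld_le_iff (by omega), hS] at hQχ
    omega
  have hχ := (H1 k' n l P (by omega) (by rw [mul_add_one]; omega) hP hPc).trans
    (chiP_le_of_forall_exists_isMonoEdge (by omega) hc hB)
  rw [cld_le_iff (by omega), hk', Nat.add_sub_cancel] at hχ
  omega

/-- the reduction lemma for products `r₁r₂`. -/
theorem stmt1 (r1 r2 b1 b2 : ℕ) (hr1 : 2 ≤ r1) (hr2 : 2 ≤ r2) (hb1 : 1 ≤ b1) (hb2 : 1 ≤ b2)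
    (H1 : ∀ (k1 n1 l : ℕ) (P : Fin l → Finset (Fin n1)), 1 ≤ k1 → r1 * k1 ≤ n1 →
      IsPartition P → (∀ i, (P i).card ≤ b1) →
      cld (n1 - r1 * (k1 - 1)) (r1 - 1) ≤ chiP r1 n1 k1 P)
    (H2 : ∀ (k2 n2 l : ℕ) (Q : Fin l → Finset (Fin n2)), 1 ≤ k2 → r2 * k2 ≤ n2 →
      IsPartition Q → (∀ i, (Q i).card ≤ b2) →
      cld (n2 - r2 * (k2 - 1)) (r2 - 1) ≤ chiP r2 n2 k2 Q)
    (k n t : ℕ) (R : Fin t → Finset (Fin n)) (hk : 1 ≤ k) (hn : r1 * r2 * k ≤ n)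
    (hR : IsPartition R) (hRc : ∀ i, (R i).card ≤ b1 * b2) :
    cld (n - r1 * r2 * (k - 1)) (r1 * r2 - 1) ≤ chiP (r1 * r2) n k R :=
  stmt1_general r1 r2 b1 b2 hr1 hr2 hb1 H1 H2 k n t R hk hR hRc
end

section
/- Let r ≥ 2, k ≥ 1, and A ⊆ [n] with |A| ≤ b(r)·(k-1), where the conclusion of Theorem (parts): χ(KG^r(m,k;Q)) = ⌈(m-r(k-1))/(r-1)⌉ holds for partitions Q with parts of size ≤ b(r). Then there exists a partition P_1,...,P_ℓ of [n] with |P_i| = b(r) for i ≤ k-1, |P_i| ≤ b(r) for i ≥ k, and A ⊆ P_1 ∪ ⋯ ∪ P_{k-1}; moreover for such a partition, every k-subset transversal to the partition is not contained in A, so KG^r(n,k;P) is a subhypergraph of KG^r_A(n,k), yielding χ(KG^r_A(n,k)) ≥ ⌈(n - r(k-1))/(r-1)⌉. -/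
/-! Relabel `[n]` so that `A` lies in the initial segment of length `b(r)(k-1)` and cut `[n]`
into consecutive blocks of length `b(r)`. A transversal `k`-set meets each of the first `k-1`
blocks at most once, so it is not contained in `A`: every vertex of `KG^r(n,k;P)` is a vertex of
`KG^r_A(n,k)`, and a proper colouring of the latter restricts to one of the former. -/

open Finset

lemma bfun_pos (r : ℕ) : 0 < bfun r :=
  Finset.prod_pos fun p (hp : p ∈ r.primeFactors) => by
    have := (Nat.prime_of_mem_primeFactors hp).two_le
    apply Nat.pow_pos
    split <;> omega

lemma bfun_le_self {r : ℕ} (hr : r ≠ 0) : bfun r ≤ r := by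
  conv_rhs => rw [← Nat.prod_factorization_pow_eq_self hr]
  refine Finset.prod_le_prod' fun p (_ : p ∈ r.primeFactors) => Nat.pow_le_pow_left ?_ _
  split <;> omega

lemma isPartition_map_equiv {N l : ℕ} {P : Fin l → Finset (Fin N)} (hP : IsPartition P)
    (e : Fin N ≃ Fin N) : IsPartition fun i => (P i).map e.toEmbedding := by
  refine ⟨fun i j hij => (Finset.disjoint_map _).2 (hP.1 i j hij), fun x => ?_⟩
  obtain ⟨i, hi⟩ := hP.2 (e.symm x)
  exact ⟨i, Finset.mem_map_equiv.2 hi⟩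

/-- Indexed by `Fin n`, so the parts of index `i ≥ ⌈n / b⌉` are empty. -/
def divBlocks (n b : ℕ) (i : Fin n) : Finset (Fin n) :=
  univ.filter fun y => y.val / b = i.val

lemma isPartition_divBlocks (n b : ℕ) : IsPartition (divBlocks n b) := by
  refine ⟨fun i j hij => Finset.disjoint_filter.2 fun y _ hi hj => hij (Fin.ext (hi ▸ hj)),
    fun y => ⟨⟨y.val / b, (Nat.div_le_self _ _).trans_lt y.isLt⟩, by simp [divBlocks]⟩⟩

lemma card_divBlocks_le {n b : ℕ} (hb : 0 < b) (i : Fin n) : (divBlocks n b i).card ≤ b := by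
  have hinj : Set.InjOn (fun y : Fin n => y.val % b) (divBlocks n b i : Set (Fin n)) := by
    intro x hx y hy hxy
    simp only [divBlocks, coe_filter, mem_univ, true_and, Set.mem_ofPred_eq] at hx hy
    rw [Fin.ext_iff, ← Nat.div_add_mod x.val b, ← Nat.div_add_mod y.val b, hx, hy]
    exact congrArg _ hxy
  simpa using card_le_card_of_injOn _ (fun y _ => mem_range.2 (Nat.mod_lt y.val hb)) hinj

lemma card_divBlocks {n b : ℕ} (hb : 0 < b) (i : Fin n) (hi : (i.val + 1) * b ≤ n) :
    (divBlocks n b i).card = b := by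
  refine (card_divBlocks_le hb i).antisymm ?_
  let f : Fin b → Fin n := fun j => ⟨i.val * b + j.val, by nlinarith [j.isLt]⟩
  have hmaps : Set.MapsTo f (univ : Finset (Fin b)) (divBlocks n b i) := fun j _ => by
    simp only [divBlocks, coe_filter, mem_univ, true_and, Set.mem_ofPred_eq, f]
    rw [Nat.add_comm, Nat.add_mul_div_right _ _ hb, Nat.div_eq_of_lt j.isLt, zero_add]
  have hinj : Set.InjOn f (univ : Finset (Fin b)) := fun j _ j' _ h =>
    Fin.ext (by simpa [f, Fin.ext_iff] using h)
  simpa using card_le_card_of_injOn f hmaps hinj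

lemma exists_perm_lt_of_card_le {n t : ℕ} {A : Finset (Fin n)} (hA : A.card ≤ t) (ht : t ≤ n) :
    ∃ e : Equiv.Perm (Fin n), ∀ x ∈ A, (e x).val < t := by
  obtain ⟨A', hAA', hA'⟩ := exists_superset_card_eq hA (by simpa using ht)
  have hcard : Fintype.card {x // x ∈ A'} = Fintype.card {y : Fin n // y.val < t} := by
    rw [Fintype.card_coe, Fintype.card_subtype, Fin.card_filter_val_lt, hA', min_eq_right ht]
  exact ⟨(Fintype.equivOfCardEq hcard).extendSubtype,
    fun x hx => Equiv.extendSubtype_mem (Fintype.equivOfCardEq hcard) x (hAA' hx)⟩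

lemma Transversal.card_le_of_subset_biUnion {N l : ℕ} {P : Fin l → Finset (Fin N)}
    {σ : Finset (Fin N)} (hσ : Transversal P σ) {S : Finset (Fin l)} (hS : σ ⊆ S.biUnion P) :
    σ.card ≤ S.card :=
  calc σ.card = (S.biUnion fun i => σ ∩ P i).card := by
        rw [← Finset.inter_biUnion, inter_eq_left.2 hS]
    _ ≤ ∑ i ∈ S, (σ ∩ P i).card := card_biUnion_le
    _ ≤ S.card := by simpa using sum_le_card_nsmul S _ 1 fun i _ => hσ i

lemma Transversal.not_subset_biUnion_filter_lt {N l m : ℕ} {P : Fin l → Finset (Fin N)}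
    {σ : Finset (Fin N)} (hσ : Transversal P σ) (hm : m < σ.card) :
    ¬ σ ⊆ (univ.filter fun i : Fin l => i.val < m).biUnion P := fun h => by
  have := hσ.card_le_of_subset_biUnion h
  rw [Fin.card_filter_val_lt] at this
  omega

lemma exists_partition_of_card_le {n b m : ℕ} (hb : 0 < b) {A : Finset (Fin n)}
    (hA : A.card ≤ b * m) (hn : b * m ≤ n) :
    ∃ (l : ℕ) (P : Fin l → Finset (Fin n)), m ≤ l ∧ IsPartition P ∧
      (∀ i : Fin l, (i.val < m → (P i).card = b) ∧ (P i).card ≤ b) ∧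
      A ⊆ (univ.filter fun i : Fin l => i.val < m).biUnion P := by
  obtain ⟨e, he⟩ := exists_perm_lt_of_card_le hA hn
  refine ⟨n, fun i => (divBlocks n b i).map e.symm.toEmbedding,
    (Nat.le_mul_of_pos_left m hb).trans hn, isPartition_map_equiv (isPartition_divBlocks n b) _,
    fun i => ⟨fun hi => ?_, by simpa using card_divBlocks_le hb i⟩, fun x hx => ?_⟩
  · rw [card_map, card_divBlocks hb i (by nlinarith)]
  · simp only [mem_biUnion, mem_filter, mem_univ, true_and, mem_map_equiv, Equiv.symm_symm]
    exact ⟨⟨(e x).val / b, (Nat.div_le_self _ _).trans_lt (e x).isLt⟩,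
      Nat.div_lt_of_lt_mul (he x hx), by simp [divBlocks]⟩

section Chromatic

variable {r N k : ℕ} {A : Finset (Fin N)}

lemma exists_properA (hr : 2 ≤ r) :
    ∃ c : Finset (Fin N) → Fin (Fintype.card (Finset (Fin N))), ProperA r N k A c := by
  refine ⟨Fintype.equivFin _, fun B _ hBA hBdisj hmono => hBA ⟨0, by omega⟩ ?_⟩
  have h01 : (⟨0, by omega⟩ : Fin r) ≠ ⟨1, by omega⟩ := by simp [Fin.ext_iff]
  have hB : B ⟨0, by omega⟩ = B ⟨1, by omega⟩ := (Fintype.equivFin _).injective (hmono _ _)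
  have hdisj := hBdisj _ _ h01
  rw [← hB, disjoint_self] at hdisj
  simp [hdisj]

lemma ProperA.properP {l m : ℕ} {P : Fin l → Finset (Fin N)} {c : Finset (Fin N) → Fin m}
    (hc : ProperA r N k A c) (hPA : ∀ σ, σ.card = k → Transversal P σ → ¬ σ ⊆ A) :
    ProperP r N k P c :=
  fun B hBcard hBtrans => hc B hBcard fun j => hPA (B j) (hBcard j) (hBtrans j)

lemma chiP_le_chiA (hr : 2 ≤ r) {l : ℕ} {P : Fin l → Finset (Fin N)}
    (hPA : ∀ σ, σ.card = k → Transversal P σ → ¬ σ ⊆ A) : chiP r N k P ≤ chiA r N k A :=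
  csInf_le_csInf (OrderBot.bddBelow _) ⟨_, exists_properA hr⟩
    fun _ ⟨c, hc⟩ => ⟨c, hc.properP hPA⟩

end Chromatic

/-- for `|A| ≤ b(r)(k-1)` there is a suitable partition whose first `k-1` parts
cover `A`; for any such partition transversal `k`-sets avoid `A`, and
`χ(KG^r_A(n,k)) ≥ ⌈(n - r(k-1))/(r-1)⌉`. -/
theorem stmt8 (r n k : ℕ) (A : Finset (Fin n)) (hr : 2 ≤ r) (hk : 1 ≤ k)
    (hn : 2 * r * k ≤ n) (hA : A.card ≤ bfun r * (k - 1))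
    (Hparts : ∀ (M K l : ℕ) (Q : Fin l → Finset (Fin M)), 1 ≤ K → r * K ≤ M →
      IsPartition Q → (∀ i, (Q i).card ≤ bfun r) →
      chiP r M K Q = cld (M - r * (K - 1)) (r - 1)) :
    (∃ (l : ℕ) (P : Fin l → Finset (Fin n)), k - 1 ≤ l ∧ IsPartition P ∧
      (∀ i : Fin l, (i.val < k - 1 → (P i).card = bfun r) ∧ (P i).card ≤ bfun r) ∧
      A ⊆ (univ.filter fun i : Fin l => i.val < k - 1).biUnion P) ∧
    (∀ (l : ℕ) (P : Fin l → Finset (Fin n)), k - 1 ≤ l → IsPartition P →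
      (∀ i : Fin l, (i.val < k - 1 → (P i).card = bfun r) ∧ (P i).card ≤ bfun r) →
      A ⊆ (univ.filter fun i : Fin l => i.val < k - 1).biUnion P →
      ∀ σ : Finset (Fin n), σ.card = k → Transversal P σ → ¬ σ ⊆ A) ∧
    cld (n - r * (k - 1)) (r - 1) ≤ chiA r n k A := by
  have hrk : r * k ≤ n := by nlinarith
  have hbn : bfun r * (k - 1) ≤ n :=
    (Nat.mul_le_mul (bfun_le_self (by omega)) (Nat.sub_le k 1)).trans hrk
  have avoid : ∀ (l : ℕ) (P : Fin l → Finset (Fin n)),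
      A ⊆ (univ.filter fun i : Fin l => i.val < k - 1).biUnion P →
      ∀ σ : Finset (Fin n), σ.card = k → Transversal P σ → ¬ σ ⊆ A :=
    fun l P hAP σ hσ hσP hσA => hσP.not_subset_biUnion_filter_lt (by omega) (hσA.trans hAP)
  obtain ⟨l, P, hkl, hP, hcard, hAP⟩ := exists_partition_of_card_le (bfun_pos r) hA hbn
  refine ⟨⟨l, P, hkl, hP, hcard, hAP⟩, fun l P _ _ _ => avoid l P, ?_⟩
  rw [← Hparts n k l P hk hrk hP fun i => (hcard i).2]
  exact chiP_le_chiA hr (avoid l P hAP)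
end

section
/- Let r be a prime, k ≥ 1, n ≥ k, s = (s_1,...,s_n) with s_i ∈ {1,...,r-1}, and let t ≥ 1 be maximal such that s_j + s_{j+1} + ⋯ + s_{j+t-1} ≤ r(k-3)+2 for every j ∈ [n-t+1]. Assume χ(KG^r(N,k;P)_{(r(k-3)+2)-wide}) ≥ ⌈(N - r(k-1))/(r-1)⌉ where N = Σ_i s_i and P is the partition of [N] into consecutive blocks of sizes s_1,...,s_n. Then χ(KG^r_s(n,k)_{t-wide}) ≥ ⌈(N - r(k-1))/(r-1)⌉. -/
open Finset

/-!
Let `π : [N] → [n]` send each element to the index of its block. A proper coloring `c` of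
`KG^r_s(n,k)_{t-wide}` pulls back to the coloring `σ ↦ c (π σ)` of the `(r(k-3)+2)`-wide
transversal `k`-subsets of `[N]`: `π` is injective on transversal sets, `r` pairwise disjoint
transversal sets project to sets of which at most `|P_i| = s_i` contain `i`, and since any `t`
consecutive blocks have total size at most `r(k-3)+2`, a set whose projection lies in an interval
of length `t` lies in an interval of length `r(k-3)+2`. So the chromatic number on `[N]` is at
most the one on `[n]`.
-/

lemma Wide.nonempty {N t : ℕ} {σ : Finset (Fin N)} (h : Wide N t σ) : σ.Nonempty := by
  rw [nonempty_iff_ne_empty]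
  rintro rfl
  exact h 0 (by simp)

section Blocks

variable {n : ℕ} (s : Fin n → ℕ)

lemma blockSum_add (a b c : ℕ) :
    blockSum s a (b + c) = blockSum s a b + blockSum s (a + b) c := by
  unfold blockSum
  rw [← add_assoc]
  exact (sum_Ico_consecutive _ (by omega : a ≤ a + b) (by omega : a + b ≤ a + b + c)).symm

lemma blockSum_zero_monotone : Monotone (blockSum s 0) := by
  intro a b hab
  obtain ⟨c, rfl⟩ := Nat.exists_eq_add_of_le hab
  rw [blockSum_add]
  exact Nat.le_add_right _ _

lemma blockSum_zero_succ (j : ℕ) : blockSum s 0 (j + 1) = blockSum s 0 j + sE s j := by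
  rw [blockSum_add]
  simp [blockSum]

lemma blockSum_zero_self : blockSum s 0 n = ∑ i, s i := by
  rw [blockSum, zero_add, ← range_eq_Ico, ← Fin.sum_univ_eq_sum_range]
  exact sum_congr rfl fun i _ => by simp [sE]

lemma mem_blocks {N : ℕ} {i : Fin n} {x : Fin N} :
    x ∈ blocks s N i ↔ blockSum s 0 i ≤ x ∧ x < blockSum s 0 (i + 1) := by
  simp [blocks]

lemma card_blocks_le (N : ℕ) (i : Fin n) : #(blocks s N i) ≤ s i :=
  calc #(blocks s N i)
      ≤ #(Ico (blockSum s 0 i) (blockSum s 0 (i + 1))) :=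
        card_le_card_of_injOn Fin.val (fun x hx => by simpa using (mem_blocks s).1 hx)
          Fin.val_injective.injOn
    _ = s i := by simp [blockSum_zero_succ, sE]

lemma exists_mem_blocks {N : ℕ} (hN : N ≤ blockSum s 0 n) (x : Fin N) :
    ∃ i, x ∈ blocks s N i := by
  set j := Nat.findGreatest (fun j => blockSum s 0 j ≤ x) n
  have hj : blockSum s 0 j ≤ x :=
    Nat.findGreatest_spec (P := fun j => blockSum s 0 j ≤ x) (Nat.zero_le n) (by simp [blockSum])
  have hjn : j < n := by
    refine lt_of_le_of_ne (Nat.findGreatest_le n) fun h => ?_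
    rw [h] at hj
    exact absurd (x.isLt.trans_le hN) hj.not_gt
  have hj1 : ¬ blockSum s 0 (j + 1) ≤ x :=
    Nat.findGreatest_is_greatest (P := fun j => blockSum s 0 j ≤ x) (Nat.lt_succ_self j) hjn
  exact ⟨⟨j, hjn⟩, (mem_blocks s).2 ⟨hj, Nat.lt_of_not_le hj1⟩⟩

lemma wide_image_of_blockSum_le {N t u : ℕ} (htn : t ≤ n)
    (hu : ∀ j, j + t ≤ n → blockSum s j t ≤ u) {π : Fin N → Fin n}
    (hπ : ∀ x, x ∈ blocks s N (π x)) {σ : Finset (Fin N)} (hσ : Wide N u σ) :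
    Wide n t (σ.image π) := by
  intro a ha
  -- shift the window left so that it stays inside `[n]`
  set a' := min a (n - t)
  refine hσ (blockSum s 0 a') fun x hx => ?_
  have hxa : a' ≤ π x ∧ π x < a' + t := by
    have := ha (π x) (mem_image_of_mem π hx)
    have := (π x).isLt
    omega
  obtain ⟨hlo, hhi⟩ := (mem_blocks s).1 (hπ x)
  have h₁ := blockSum_zero_monotone s hxa.1
  have h₂ := blockSum_zero_monotone s (show (π x : ℕ) + 1 ≤ a' + t by omega)
  have h₃ := blockSum_add s 0 a' t
  have h₄ := hu a' (by omega)
  rw [zero_add] at h₃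
  omega

end Blocks

section Projection

variable {r n N k t u : ℕ} {s : Fin n → ℕ} {P : Fin n → Finset (Fin N)} {π : Fin N → Fin n}

lemma Transversal.injOn (hπ : ∀ x, x ∈ P (π x)) {σ : Finset (Fin N)} (hσ : Transversal P σ) :
    Set.InjOn π σ := fun x hx y hy hxy =>
  card_le_one.1 (hσ (π x)) x (mem_inter.2 ⟨hx, hπ x⟩) y (mem_inter.2 ⟨hy, hxy ▸ hπ y⟩)

lemma card_filter_mem_image_le (hπ : ∀ x, x ∈ P (π x)) {A : Fin r → Finset (Fin N)}
    (hA : ∀ j j', j ≠ j' → Disjoint (A j) (A j')) (i : Fin n) :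
    ((univ : Finset (Fin r)).filter fun j => i ∈ (A j).image π).card ≤ #(P i) :=
  calc _ ≤ #(((univ : Finset (Fin r)).filter fun j => i ∈ (A j).image π).biUnion
          fun j => A j ∩ P i) := by
        refine card_le_card_biUnion
          (fun j _ j' _ hne => (hA j j' hne).mono inter_subset_left inter_subset_left)
          fun j hj => ?_
        obtain ⟨x, hx, rfl⟩ := mem_image.1 (mem_filter.1 hj).2
        exact ⟨x, mem_inter.2 ⟨hx, hπ x⟩⟩
    _ ≤ #(P i) := card_le_card (biUnion_subset.2 fun _ _ => inter_subset_right)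

lemma ProperSW.comp_image {m : ℕ} {c : Finset (Fin n) → Fin m} (hc : ProperSW r n k t s c)
    (hπ : ∀ x, x ∈ P (π x)) (hP : ∀ i, #(P i) ≤ s i)
    (hwide : ∀ σ, Wide N u σ → Wide n t (σ.image π)) :
    ProperPW r N k u P fun σ => c (σ.image π) := by
  intro A hcard htrans hwideA hdisj
  refine hc (fun j => (A j).image π) (fun j => ?_) (fun j => hwide _ (hwideA j))
    fun i => (card_filter_mem_image_le hπ hdisj i).trans (hP i)
  rw [card_image_of_injOn ((htrans j).injOn hπ), hcard j]

lemma exists_properSW (hr : 0 < r) (hs : ∀ i, s i < r) :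
    ∃ m, ∃ c : Finset (Fin n) → Fin m, ProperSW r n k t s c := by
  refine ⟨_, Fintype.equivFin _, fun A _ hwide hmult hall => ?_⟩
  let j₀ : Fin r := ⟨0, hr⟩
  have hA : ∀ j, A j = A j₀ := fun j => (Fintype.equivFin _).injective (hall j j₀)
  obtain ⟨i, hi⟩ := (hwide j₀).nonempty
  have hri := hmult i
  rw [filter_true_of_mem fun j _ => hA j ▸ hi, card_univ, Fintype.card_fin] at hri
  exact (hs i).not_ge hri

lemma chiPW_le_chiSW (hr : 0 < r) (hs : ∀ i, s i < r) (hπ : ∀ x, x ∈ P (π x))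
    (hP : ∀ i, #(P i) ≤ s i) (hwide : ∀ σ, Wide N u σ → Wide n t (σ.image π)) :
    chiPW r N k u P ≤ chiSW r n k t s := by
  obtain ⟨c, hc⟩ := Nat.sInf_mem (exists_properSW (k := k) (t := t) hr hs)
  exact Nat.sInf_le ⟨_, hc.comp_image hπ hP hwide⟩

lemma chiPW_blocks_le_chiSW (hr : 0 < r) (hs : ∀ i, s i < r) (htn : t ≤ n)
    (hu : ∀ j, j + t ≤ n → blockSum s j t ≤ u) (hN : N ≤ blockSum s 0 n) :
    chiPW r N k u (blocks s N) ≤ chiSW r n k t s := by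
  choose π hπ using exists_mem_blocks s hN
  exact chiPW_le_chiSW hr hs hπ (card_blocks_le s N) fun _ =>
    wide_image_of_blockSum_le s htn hu hπ

end Projection

theorem stmt11_general (r n k t : ℕ) (hr : r.Prime)
    (s : Fin n → ℕ) (hs : ∀ i, 1 ≤ s i ∧ s i ≤ r - 1) (htn : t ≤ n)
    (htle : ∀ j : ℕ, j + t ≤ n → (blockSum s j t : ℤ) ≤ r * ((k : ℤ) - 3) + 2)
    (N : ℕ) (hN : N = ∑ i, s i)
    (hlow : cld (N - r * (k - 1)) (r - 1) ≤ chiPW r N k (r * (k - 3) + 2) (blocks s N)) :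
    cld (N - r * (k - 1)) (r - 1) ≤ chiSW r n k t s := by
  have hs' : ∀ i, s i < r := fun i => by have := (hs i).2; have := hr.pos; omega
  -- `k - 3` truncates in `ℕ`, which only enlarges the bound of `htle`
  have hu : ∀ j, j + t ≤ n → blockSum s j t ≤ r * (k - 3) + 2 := by
    intro j hj
    have hk : (r : ℤ) * ((k : ℤ) - 3) ≤ r * ((k - 3 : ℕ) : ℤ) :=
      mul_le_mul_of_nonneg_left (by omega) (Int.natCast_nonneg r)
    have : (blockSum s j t : ℤ) ≤ ((r * (k - 3) + 2 : ℕ) : ℤ) := by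
      push_cast
      linarith [htle j hj]
    exact_mod_cast this
  exact hlow.trans <| chiPW_blocks_le_chiSW hr.pos hs' htn hu (by rw [hN, blockSum_zero_self])

/-- lower bound for `χ(KG^r_s(n,k)_{t-wide})` via the wide transversal
hypergraph for the consecutive-blocks partition. -/
theorem stmt11 (r n k t : ℕ) (hr : r.Prime) (hk : 1 ≤ k) (hn : k ≤ n)
    (s : Fin n → ℕ) (hs : ∀ i, 1 ≤ s i ∧ s i ≤ r - 1) (ht1 : 1 ≤ t) (htn : t ≤ n)
    (htle : ∀ j : ℕ, j + t ≤ n → (blockSum s j t : ℤ) ≤ r * ((k : ℤ) - 3) + 2)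
    (htmax : ∀ t' : ℕ, t < t' → t' ≤ n →
      ¬ ∀ j : ℕ, j + t' ≤ n → (blockSum s j t' : ℤ) ≤ r * ((k : ℤ) - 3) + 2)
    (N : ℕ) (hN : N = ∑ i, s i)
    (hlow : cld (N - r * (k - 1)) (r - 1) ≤ chiPW r N k (r * (k - 3) + 2) (blocks s N)) :
    cld (N - r * (k - 1)) (r - 1) ≤ chiSW r n k t s :=
  stmt11_general r n k t hr s hs htn htle N hN hlow
end
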